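/- Let U be uniformly distributed on (0,1), let F0 and F1 be cumulative distribution functions with quantile functions Q0 and Q1 satisfying Q1(u) ≤ Q0(u) for all u ∈ (0,1), and set h0 := Q0(U), h1 := Q1(U). Fix k ∈ ℝ and suppose: F0 is differentiable at k with F0(k) ∈ (0,1) and f0(k) := F0'(k) > 0 and ln(1 − F0) is concave on {F0 < 1}; F1 is differentiable at k with F1(k) ∈ (0,1) and f1(k) := F1'(k) > 0 and ln F1 is concave on {F1 > 0}; and B := F1(k) − F0(k) > 0. Then E[h0 − h1 | h1 ≤ k ≤ h0] ≤ −g(1 − F0(k), f0(k), −B) − g(F1(k), f1(k), −B). -/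

import Mathlib

open MeasureTheory

/-- A cumulative distribution function: monotone, right-continuous, with limits
0 at `-∞` and 1 at `+∞`. -/
def IsCDF (F : ℝ → ℝ) : Prop :=
  Monotone F ∧ (∀ x, ContinuousWithinAt F (Set.Ici x) x) ∧
    Filter.Tendsto F Filter.atBot (nhds 0) ∧ Filter.Tendsto F Filter.atTop (nhds 1)

/-- The quantile function of a CDF: `Q(u) = inf {x | F x ≥ u}`. -/
noncomputable def quantile (F : ℝ → ℝ) (u : ℝ) : ℝ := sInf {x | u ≤ F x}

/-- The function `g(a,b,x) = (a/(b·x))·(a+x)·ln(1 + x/a) - a/b` from the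
paper's Theorem 1. -/
noncomputable def g (a b x : ℝ) : ℝ :=
  a / (b * x) * (a + x) * Real.log (1 + x / a) - a / b

/-!
Both potential outcomes are quantiles of the same uniform `U`, so up to the null event
`U = F₀ k` the bunchers are the units with `F₀ k < U ≤ F₁ k`, an event of probability
`B = F₁ k - F₀ k`. Concavity of `log (1 - F₀)` and of `log F₁` puts them below their tangents
at `k`, which gives `Q₀ u ≤ k + (1 - F₀ k) / f₀ · log ((1 - F₀ k) / (1 - u))` and
`Q₁ u ≥ k - F₁ k / f₁ · log (F₁ k / u)`. Integrating the difference of these explicit bounds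
over `u ∈ (F₀ k, F₁ k]` yields `B` times the right-hand side.
-/

open Set Filter Real Topology

lemma ConcaveOn.le_add_mul_sub_of_hasDerivAt {S : Set ℝ} {f : ℝ → ℝ} {f' x y : ℝ}
    (hf : ConcaveOn ℝ S f) (hx : x ∈ S) (hy : y ∈ S) (hd : HasDerivAt f f' x) :
    f y ≤ f x + f' * (y - x) := by
  rcases lt_trichotomy y x with hyx | rfl | hxy
  · have hslope := hf.le_slope_of_hasDerivAt hy hx hyx hd
    rw [slope_def_field, le_div_iff₀ (sub_pos.2 hyx)] at hslope
    linarith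
  · simp
  · have hslope := hf.slope_le_of_hasDerivAt hx hy hxy hd
    rw [slope_def_field, div_le_iff₀ (sub_pos.2 hxy)] at hslope
    linarith

namespace IsCDF

variable {F : ℝ → ℝ} {f k u : ℝ}

lemma bddBelow_setOf_le (hF : IsCDF F) (hu : 0 < u) : BddBelow {x | u ≤ F x} := by
  obtain ⟨z, hz⟩ := eventually_atBot.mp (hF.2.2.1.eventually (gt_mem_nhds hu))
  exact ⟨z, fun x hx => not_lt.mp fun hxz => (hz x hxz.le).not_ge hx⟩

lemma nonempty_setOf_le (hF : IsCDF F) (hu : u < 1) : {x | u ≤ F x}.Nonempty :=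
  let ⟨x, hx⟩ := (hF.2.2.2.eventually (lt_mem_nhds hu)).exists
  ⟨x, hx.le⟩

lemma quantile_le_iff (hF : IsCDF F) (hu0 : 0 < u) (hu1 : u < 1) {y : ℝ} :
    quantile F u ≤ y ↔ u ≤ F y := by
  refine ⟨fun h => ?_, fun h => csInf_le (hF.bddBelow_setOf_le hu0) h⟩
  set q := quantile F u
  have hright : ∀ᶠ x in 𝓝[>] q, u ≤ F x := eventually_nhdsWithin_of_forall fun x hx => by
    obtain ⟨s, hs, hsx⟩ := exists_lt_of_csInf_lt (hF.nonempty_setOf_le hu1) hx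
    exact hs.trans (hF.1 hsx.le)
  have hq : u ≤ F q := ge_of_tendsto ((hF.2.1 q).mono Ioi_subset_Ici_self) hright
  exact hq.trans (hF.1 h)

lemma lt_quantile_iff (hF : IsCDF F) (hu0 : 0 < u) (hu1 : u < 1) {y : ℝ} :
    y < quantile F u ↔ F y < u := by
  simpa only [not_le] using (hF.quantile_le_iff hu0 hu1).not

lemma quantile_lt_of_lt (hF : IsCDF F) (hk : ContinuousAt F k) (hu0 : 0 < u) (hu1 : u < 1)
    (hu : u < F k) : quantile F u < k := by
  obtain ⟨x, hxk, hx⟩ := (hk.eventually (lt_mem_nhds hu)).exists_lt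
  exact ((hF.quantile_le_iff hu0 hu1).mpr hx.le).trans_lt hxk

lemma monotoneOn_quantile (hF : IsCDF F) : MonotoneOn (quantile F) (Ioo 0 1) :=
  fun _ hu _ hv huv =>
    csInf_le_csInf (hF.bddBelow_setOf_le hu.1) (hF.nonempty_setOf_le hv.2)
      fun _ hx => huv.trans hx

lemma aestronglyMeasurable_quantile (hF : IsCDF F) :
    AEStronglyMeasurable (quantile F) (volume.restrict (Ioo 0 1)) :=
  (aemeasurable_restrict_of_monotoneOn measurableSet_Ioo
    hF.monotoneOn_quantile).aestronglyMeasurable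

lemma integrableOn_quantile (hF : IsCDF F) {a b : ℝ} (ha : 0 < a) (hb : b < 1) :
    IntegrableOn (quantile F) (Icc a b) :=
  (hF.monotoneOn_quantile.mono (Icc_subset_Ioo ha hb)).integrableOn_isCompact isCompact_Icc

lemma quantile_le_of_concaveOn_log_one_sub (hF : IsCDF F)
    (hlc : ConcaveOn ℝ {x | F x < 1} fun x => log (1 - F x)) (hk : F k < 1) (hf : 0 < f)
    (hd : HasDerivAt F f k) (hu0 : 0 < u) (hu1 : u < 1) :
    quantile F u ≤ k + (1 - F k) / f * (log (1 - F k) - log (1 - u)) := by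
  set c := (1 - F k) / f * (log (1 - F k) - log (1 - u))
  rw [hF.quantile_le_iff hu0 hu1]
  by_cases hc : F (k + c) < 1
  · have htangent := hlc.le_add_mul_sub_of_hasDerivAt hk hc
      ((hd.const_sub 1).log (sub_pos.2 hk).ne')
    have hslope : -f / (1 - F k) * (k + c - k) = log (1 - u) - log (1 - F k) := by
      simp only [c]
      field_simp [(sub_pos.2 hk).ne']
      ring
    rw [hslope, add_sub_cancel, log_le_log_iff (sub_pos.2 hc) (sub_pos.2 hu1)] at htangent
    linarith
  · linarith [not_lt.mp hc]

lemma le_quantile_of_concaveOn_log (hF : IsCDF F)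
    (hlc : ConcaveOn ℝ {x | 0 < F x} fun x => log (F x)) (hk : 0 < F k) (hf : 0 < f)
    (hd : HasDerivAt F f k) (hu0 : 0 < u) (hu1 : u < 1) :
    k - F k / f * (log (F k) - log u) ≤ quantile F u := by
  set q := quantile F u
  have hq : u ≤ F q := (hF.quantile_le_iff hu0 hu1).mp le_rfl
  have htangent := hlc.le_add_mul_sub_of_hasDerivAt hk (hu0.trans_le hq) (hd.log hk.ne')
  have hlog : log u ≤ log (F q) := log_le_log hu0 hq
  have hmul : F k / f * (log u - log (F k)) ≤ F k / f * (f / F k * (q - k)) :=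
    mul_le_mul_of_nonneg_left (by linarith) (div_pos hk hf).le
  rw [show F k / f * (f / F k * (q - k)) = q - k by field_simp] at hmul
  linarith

end IsCDF

section UniformLaw

variable {Ω : Type*} [MeasurableSpace Ω] {μ : Measure Ω} {U : Ω → ℝ}

lemma ae_mem_Ioo_and_ne_of_map_eq (hU : Measurable U)
    (hUnif : μ.map U = volume.restrict (Ioo 0 1)) (c : ℝ) :
    ∀ᵐ ω ∂μ, U ω ∈ Ioo 0 1 ∧ U ω ≠ c := by
  have h : ∀ᵐ u ∂μ.map U, u ∈ Ioo 0 1 ∧ u ≠ c := by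
    rw [hUnif]
    exact (ae_restrict_mem measurableSet_Ioo).and (ae_restrict_of_ae (Measure.ae_ne volume c))
  exact ae_of_ae_map hU.aemeasurable h

lemma measure_preimage_of_map_eq (hU : Measurable U)
    (hUnif : μ.map U = volume.restrict (Ioo 0 1)) {T : Set ℝ} (hT : MeasurableSet T)
    (hT1 : T ⊆ Ioo 0 1) : μ (U ⁻¹' T) = volume T := by
  rw [← Measure.map_apply hU hT, hUnif, Measure.restrict_apply hT, inter_eq_left.mpr hT1]

lemma setIntegral_preimage_of_map_eq (hU : Measurable U)
    (hUnif : μ.map U = volume.restrict (Ioo 0 1)) {T : Set ℝ} (hT : MeasurableSet T)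
    (hT1 : T ⊆ Ioo 0 1) {φ : ℝ → ℝ} (hφ : AEStronglyMeasurable φ (volume.restrict (Ioo 0 1))) :
    ∫ ω in U ⁻¹' T, φ (U ω) ∂μ = ∫ u in T, φ u := by
  rw [← setIntegral_map hT (hUnif ▸ hφ) hU.aemeasurable, hUnif,
    Measure.restrict_restrict hT, inter_eq_left.mpr hT1]

lemma setOf_quantile_le_le_quantile_ae_eq {F₀ F₁ : ℝ → ℝ} {k : ℝ} (hU : Measurable U)
    (hUnif : μ.map U = volume.restrict (Ioo 0 1)) (hF₀ : IsCDF F₀) (hF₁ : IsCDF F₁)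
    (hk : ContinuousAt F₀ k) :
    {ω | quantile F₁ (U ω) ≤ k ∧ k ≤ quantile F₀ (U ω)} =ᵐ[μ] U ⁻¹' Ioc (F₀ k) (F₁ k) := by
  refine eventuallyEq_set.mpr ?_
  filter_upwards [ae_mem_Ioo_and_ne_of_map_eq hU hUnif (F₀ k)] with ω ⟨⟨hu0, hu1⟩, hne⟩
  have hle : k ≤ quantile F₀ (U ω) ↔ F₀ k < U ω :=
    ⟨fun h => lt_of_not_ge fun hU' => h.not_gt (hF₀.quantile_lt_of_lt hk hu0 hu1
      (lt_of_le_of_ne hU' hne)), fun h => ((hF₀.lt_quantile_iff hu0 hu1).mpr h).le⟩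
  simp only [mem_preimage, mem_Ioc, hF₁.quantile_le_iff hu0 hu1, hle, and_comm]

end UniformLaw

lemma integral_mul_log_sub_log_eq_neg_mul_g (a b B : ℝ) :
    ∫ v in (a - B)..a, a / b * (log a - log v) = -(B * g a b (-B)) := by
  rw [intervalIntegral.integral_const_mul,
    intervalIntegral.integral_sub intervalIntegrable_const intervalIntegral.intervalIntegrable_log',
    intervalIntegral.integral_const, integral_log, smul_eq_mul, g]
  -- The degenerate cases hold through the conventions `x / 0 = 0` and `log 0 = 0`.
  rcases eq_or_ne B 0 with rfl | hB
  · simp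
  rcases eq_or_ne a 0 with rfl | ha
  · simp
  rcases eq_or_ne (a - B) 0 with haB | haB
  · obtain rfl : B = a := by linarith
    simp only [sub_self, add_neg_cancel, log_zero]
    ring
  rw [show 1 + -B / a = (a - B) / a by field_simp; ring, log_div haB ha]
  field_simp
  ring

lemma intervalIntegrable_log_one_sub (a b : ℝ) :
    IntervalIntegrable (fun u => log (1 - u)) volume a b := by
  simpa only [sub_sub_cancel] using
    (intervalIntegral.intervalIntegrable_log' (a := 1 - a) (b := 1 - b)).comp_sub_left 1

lemma integral_add_mul_log_eq_neg_g_sub_g (p₀ p₁ b₀ b₁ : ℝ) :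
    ∫ u in p₀..p₁, ((1 - p₀) / b₀ * (log (1 - p₀) - log (1 - u)) + p₁ / b₁ * (log p₁ - log u)) =
      (p₁ - p₀) * (-g (1 - p₀) b₀ (-(p₁ - p₀)) - g p₁ b₁ (-(p₁ - p₀))) := by
  have hupper := integral_mul_log_sub_log_eq_neg_mul_g (1 - p₀) b₀ (p₁ - p₀)
  have hlower := integral_mul_log_sub_log_eq_neg_mul_g p₁ b₁ (p₁ - p₀)
  rw [sub_sub_sub_cancel_right, ← intervalIntegral.integral_comp_sub_left] at hupper
  rw [sub_sub_cancel] at hlower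
  rw [intervalIntegral.integral_add
    ((intervalIntegrable_const.sub (intervalIntegrable_log_one_sub p₀ p₁)).const_mul _)
    ((intervalIntegrable_const.sub intervalIntegral.intervalIntegrable_log').const_mul _),
    hupper, hlower]
  ring

lemma integral_quantile_sub_quantile_le {F₀ F₁ : ℝ → ℝ} {k f₀ f₁ : ℝ} (hF₀ : IsCDF F₀)
    (hF₁ : IsCDF F₁) (hlc₀ : ConcaveOn ℝ {x | F₀ x < 1} fun x => log (1 - F₀ x))
    (hlc₁ : ConcaveOn ℝ {x | 0 < F₁ x} fun x => log (F₁ x))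
    (hd₀ : HasDerivAt F₀ f₀ k) (hd₁ : HasDerivAt F₁ f₁ k) (hf₀ : 0 < f₀) (hf₁ : 0 < f₁)
    (h₀ : 0 < F₀ k) (h₀₁ : F₀ k ≤ F₁ k) (h₁ : F₁ k < 1) :
    ∫ u in F₀ k..F₁ k, (quantile F₀ u - quantile F₁ u) ≤
      (F₁ k - F₀ k) * (-g (1 - F₀ k) f₀ (-(F₁ k - F₀ k)) - g (F₁ k) f₁ (-(F₁ k - F₀ k))) := by
  have hI : Icc (F₀ k) (F₁ k) ⊆ Ioo 0 1 := Icc_subset_Ioo h₀ h₁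
  rw [← integral_add_mul_log_eq_neg_g_sub_g]
  refine intervalIntegral.integral_mono_on h₀₁ ?_ ?_ fun u hu => ?_
  · rw [intervalIntegrable_iff_integrableOn_Icc_of_le h₀₁]
    exact (hF₀.integrableOn_quantile h₀ h₁).sub (hF₁.integrableOn_quantile h₀ h₁)
  · exact ((intervalIntegrable_const.sub (intervalIntegrable_log_one_sub _ _)).const_mul _).add
      ((intervalIntegrable_const.sub intervalIntegral.intervalIntegrable_log').const_mul _)
  · linarith [hF₀.quantile_le_of_concaveOn_log_one_sub hlc₀ (h₀₁.trans_lt h₁) hf₀ hd₀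
        (hI hu).1 (hI hu).2,
      hF₁.le_quantile_of_concaveOn_log hlc₁ (h₀.trans_le h₀₁) hf₁ hd₁ (hI hu).1 (hI hu).2]

theorem stmt10_general {Ω : Type*} [MeasurableSpace Ω] (μ : Measure Ω)
    (U : Ω → ℝ) (hU : Measurable U)
    (hUnif : μ.map U = volume.restrict (Set.Ioo (0 : ℝ) 1))
    (F0 F1 : ℝ → ℝ) (hF0 : IsCDF F0) (hF1 : IsCDF F1)
    (h0 h1 : Ω → ℝ)
    (hh0 : h0 = fun ω => quantile F0 (U ω))
    (hh1 : h1 = fun ω => quantile F1 (U ω))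
    (k f0 f1 : ℝ)
    (hF0k : F0 k ∈ Set.Ioo (0 : ℝ) 1) (hf0 : 0 < f0)
    (hd0 : HasDerivAt F0 f0 k)
    (hlc0 : ConcaveOn ℝ {x | F0 x < 1} (fun x => Real.log (1 - F0 x)))
    (hF1k : F1 k ∈ Set.Ioo (0 : ℝ) 1) (hf1 : 0 < f1)
    (hd1 : HasDerivAt F1 f1 k)
    (hlc1 : ConcaveOn ℝ {x | 0 < F1 x} (fun x => Real.log (F1 x)))
    (hB : 0 < F1 k - F0 k) :
    (∫ ω in {ω | h1 ω ≤ k ∧ k ≤ h0 ω}, (h0 ω - h1 ω) ∂μ)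
          / (μ {ω | h1 ω ≤ k ∧ k ≤ h0 ω}).toReal
      ≤ -g (1 - F0 k) f0 (-(F1 k - F0 k)) - g (F1 k) f1 (-(F1 k - F0 k)) := by
  subst hh0 hh1
  have hle : F0 k ≤ F1 k := sub_nonneg.mp hB.le
  have hT : Ioc (F0 k) (F1 k) ⊆ Ioo 0 1 := Ioc_subset_Icc_self.trans (Icc_subset_Ioo hF0k.1 hF1k.2)
  have hS := setOf_quantile_le_le_quantile_ae_eq hU hUnif hF0 hF1 hd0.continuousAt
  have hden : (μ {ω | quantile F1 (U ω) ≤ k ∧ k ≤ quantile F0 (U ω)}).toReal = F1 k - F0 k := by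
    rw [measure_congr hS, measure_preimage_of_map_eq hU hUnif measurableSet_Ioc hT,
      Real.volume_Ioc, ENNReal.toReal_ofReal hB.le]
  have hnum : ∫ ω in {ω | quantile F1 (U ω) ≤ k ∧ k ≤ quantile F0 (U ω)},
        (quantile F0 (U ω) - quantile F1 (U ω)) ∂μ =
      ∫ u in F0 k..F1 k, (quantile F0 u - quantile F1 u) := by
    rw [setIntegral_congr_set hS, intervalIntegral.integral_of_le hle]
    exact setIntegral_preimage_of_map_eq hU hUnif measurableSet_Ioc hT
      (hF0.aestronglyMeasurable_quantile.sub hF1.aestronglyMeasurable_quantile)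
  rw [hnum, hden, div_le_iff₀ hB, mul_comm]
  exact integral_quantile_sub_quantile_le hF0 hF1 hlc0 hlc1 hd0 hd1 hf0 hf1 hF0k.1 hle hF1k.2

/-- Upper bound `Δ_k^U` of the paper's Theorem 1 (rank-invariant case, no
counterfactual bunchers): under bi-log-concavity conditions (concavity of
`ln(1 - F0)` and of `ln F1`), the buncher ATE `E[h0 - h1 | h1 ≤ k ≤ h0]` is at
most `-g(1 - F0(k), f0(k), -B) - g(F1(k), f1(k), -B)` where `B = F1(k) - F0(k)`. -/
theorem stmt10 {Ω : Type*} [MeasurableSpace Ω] (μ : Measure Ω)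
    [IsProbabilityMeasure μ]
    (U : Ω → ℝ) (hU : Measurable U)
    (hUnif : μ.map U = volume.restrict (Set.Ioo (0 : ℝ) 1))
    (F0 F1 : ℝ → ℝ) (hF0 : IsCDF F0) (hF1 : IsCDF F1)
    (hQle : ∀ u ∈ Set.Ioo (0 : ℝ) 1, quantile F1 u ≤ quantile F0 u)
    (h0 h1 : Ω → ℝ)
    (hh0 : h0 = fun ω => quantile F0 (U ω))
    (hh1 : h1 = fun ω => quantile F1 (U ω))
    (k f0 f1 : ℝ)
    (hF0k : F0 k ∈ Set.Ioo (0 : ℝ) 1) (hf0 : 0 < f0)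
    (hd0 : HasDerivAt F0 f0 k)
    (hlc0 : ConcaveOn ℝ {x | F0 x < 1} (fun x => Real.log (1 - F0 x)))
    (hF1k : F1 k ∈ Set.Ioo (0 : ℝ) 1) (hf1 : 0 < f1)
    (hd1 : HasDerivAt F1 f1 k)
    (hlc1 : ConcaveOn ℝ {x | 0 < F1 x} (fun x => Real.log (F1 x)))
    (hB : 0 < F1 k - F0 k) :
    (∫ ω in {ω | h1 ω ≤ k ∧ k ≤ h0 ω}, (h0 ω - h1 ω) ∂μ)
          / (μ {ω | h1 ω ≤ k ∧ k ≤ h0 ω}).toReal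
      ≤ -g (1 - F0 k) f0 (-(F1 k - F0 k)) - g (F1 k) f1 (-(F1 k - F0 k)) :=
  stmt10_general μ U hU hUnif F0 F1 hF0 hF1 h0 h1 hh0 hh1 k f0 f1 hF0k hf0 hd0 hlc0 hF1k hf1 hd1
    hlc1 hB
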